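/- arXiv:1802.00994 — 4 statements merged into one kernel-verified Lean document; each statement's English description precedes it below -/
import Mathlib

section
/- For every θ > 0 and every real t with e^t < θ + 1, the moment generating function of the Poisson–Lindley distribution satisfies ∑_{x=0}^∞ e^{tx} · θ²(x + θ + 2)/(θ + 1)^{x+3} = (θ²/(1 + θ)) · [1/(1 + θ − e^t)² + 1/(1 + θ − e^t)]. -/
/-! With `q = e^t / (θ + 1)` the summand is `θ² / (θ + 1)³ · (x + θ + 2) · q^x`, so the mgf is an
arithmetico-geometric series, summed by `∑ x q^x = q / (1 - q)²` and `∑ q^x = 1 / (1 - q)`. -/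

theorem hasSum_coe_add_mul_geometric {𝕜 : Type*} [NormedField 𝕜] [CompleteSpace 𝕜] {r : 𝕜}
    (hr : ‖r‖ < 1) (c : 𝕜) :
    HasSum (fun n : ℕ ↦ (n + c) * r ^ n) (r / (1 - r) ^ 2 + c / (1 - r)) := by
  simpa only [add_mul, div_eq_mul_inv, one_mul] using
    (hasSum_coe_mul_geometric_of_norm_lt_one hr).add
      ((hasSum_geometric_of_norm_lt_one hr).mul_left c)

theorem exp_mul_mul_poissonLindley (θ t : ℝ) (hθ : θ + 1 ≠ 0) (x : ℕ) :
    Real.exp (t * x) * (θ ^ 2 * ((x : ℝ) + θ + 2) / (θ + 1) ^ (x + 3)) =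
      θ ^ 2 / (θ + 1) ^ 3 * ((x + (θ + 2)) * (Real.exp t / (θ + 1)) ^ x) := by
  rw [mul_comm t, Real.exp_nat_mul, div_pow, pow_add]
  field_simp
  ring

theorem poissonLindley_mgf_general (θ : ℝ) (t : ℝ) (ht : Real.exp t < θ + 1) :
    ∑' x : ℕ, Real.exp (t * x) * (θ ^ 2 * ((x : ℝ) + θ + 2) / (θ + 1) ^ (x + 3)) =
      θ ^ 2 / (1 + θ) *
        (1 / (1 + θ - Real.exp t) ^ 2 + 1 / (1 + θ - Real.exp t)) := by
  have hθ : 0 < θ + 1 := (Real.exp_pos t).trans ht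
  have hq : ‖Real.exp t / (θ + 1)‖ < 1 := by
    rwa [Real.norm_of_nonneg (by positivity), div_lt_one hθ]
  rw [tsum_congr (exp_mul_mul_poissonLindley θ t hθ.ne'),
    ((hasSum_coe_add_mul_geometric hq (θ + 2)).mul_left _).tsum_eq]
  have hD : θ + 1 - Real.exp t ≠ 0 := by linarith
  have h1q : 1 - Real.exp t / (θ + 1) = (θ + 1 - Real.exp t) / (θ + 1) := by
    field_simp
  rw [h1q, add_comm 1 θ]
  field_simp
  ring

/-- For every `θ > 0` and every real `t` with `e^t < θ + 1`, the moment generating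
function of the Poisson–Lindley distribution satisfies
`∑_{x=0}^∞ e^{tx} θ²(x + θ + 2)/(θ + 1)^{x+3}
  = (θ²/(1 + θ)) [1/(1 + θ − e^t)² + 1/(1 + θ − e^t)]`. -/
theorem poissonLindley_mgf (θ : ℝ) (hθ : 0 < θ) (t : ℝ) (ht : Real.exp t < θ + 1) :
    ∑' x : ℕ, Real.exp (t * x) * (θ ^ 2 * ((x : ℝ) + θ + 2) / (θ + 1) ^ (x + 3)) =
      θ ^ 2 / (1 + θ) *
        (1 / (1 + θ - Real.exp t) ^ 2 + 1 / (1 + θ - Real.exp t)) :=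
  poissonLindley_mgf_general θ t ht
end

section
/- For every θ > 0 and every x ∈ ℕ, mixing a Poisson(λ) pmf over a Lindley(θ) density yields the Poisson–Lindley pmf: ∫_0^∞ (e^{−λ} λ^x / x!) · (θ²/(θ + 1))(1 + λ)e^{−θλ} dλ = θ²(x + θ + 2)/(θ + 1)^{x+3}. -/
open MeasureTheory

/-!
Writing `e^{-λ} e^{-θλ} = e^{-(θ+1)λ}`, the mixture integral is a combination of the Gamma
integrals `∫₀^∞ λ^n e^{-rλ} dλ = n! / r^{n+1}` for `n = x, x + 1` and `r = θ + 1`.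
-/

lemma integral_pow_mul_exp_neg_mul_Ioi {r : ℝ} (hr : 0 < r) (n : ℕ) :
    ∫ t in Set.Ioi (0 : ℝ), t ^ n * Real.exp (-(r * t)) = n.factorial / r ^ (n + 1) := by
  have h := Real.integral_rpow_mul_exp_neg_mul_Ioi (a := n + 1) (by positivity) hr
  rw [add_sub_cancel_right, Real.Gamma_nat_eq_factorial, ← Nat.cast_succ] at h
  simp_rw [Real.rpow_natCast, one_div, inv_pow] at h
  rw [h, div_eq_inv_mul]

lemma integrableOn_pow_mul_exp_neg_mul_Ioi {r : ℝ} (hr : 0 < r) (n : ℕ) :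
    IntegrableOn (fun t ↦ t ^ n * Real.exp (-(r * t))) (Set.Ioi 0) :=
  .of_integral_ne_zero (by rw [integral_pow_mul_exp_neg_mul_Ioi hr]; positivity)

lemma integral_pow_mul_one_add_mul_exp_neg_mul_Ioi {r : ℝ} (hr : 0 < r) (n : ℕ) :
    ∫ t in Set.Ioi (0 : ℝ), t ^ n * (1 + t) * Real.exp (-(r * t)) =
      n.factorial * (n + 1 + r) / r ^ (n + 2) := by
  have split : ∀ t : ℝ, t ^ n * (1 + t) * Real.exp (-(r * t)) =
      t ^ n * Real.exp (-(r * t)) + t ^ (n + 1) * Real.exp (-(r * t)) := fun t ↦ by ring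
  simp_rw [split]
  rw [integral_add (integrableOn_pow_mul_exp_neg_mul_Ioi hr n)
    (integrableOn_pow_mul_exp_neg_mul_Ioi hr (n + 1)), integral_pow_mul_exp_neg_mul_Ioi hr,
    integral_pow_mul_exp_neg_mul_Ioi hr, Nat.factorial_succ]
  push_cast
  field_simp
  ring

/-- For every `θ > 0` and `x ∈ ℕ`, mixing a Poisson(λ) pmf over a Lindley(θ) density
yields the Poisson–Lindley pmf:
`∫_0^∞ (e^{−λ} λ^x / x!) (θ²/(θ + 1))(1 + λ)e^{−θλ} dλ = θ²(x + θ + 2)/(θ + 1)^{x+3}`. -/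
theorem poisson_mixed_over_lindley (θ : ℝ) (hθ : 0 < θ) (x : ℕ) :
    ∫ l in Set.Ioi (0 : ℝ),
        (Real.exp (-l) * l ^ x / (Nat.factorial x : ℝ)) *
          (θ ^ 2 / (θ + 1) * (1 + l) * Real.exp (-θ * l)) =
      θ ^ 2 * ((x : ℝ) + θ + 2) / (θ + 1) ^ (x + 3) := by
  have hθ₁ : 0 < θ + 1 := by linarith
  have integrand : ∀ l : ℝ,
      (Real.exp (-l) * l ^ x / (x.factorial : ℝ)) *
        (θ ^ 2 / (θ + 1) * (1 + l) * Real.exp (-θ * l)) =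
      θ ^ 2 / ((θ + 1) * x.factorial) * (l ^ x * (1 + l) * Real.exp (-((θ + 1) * l))) := by
    intro l
    rw [show -((θ + 1) * l) = -l + -θ * l by ring, Real.exp_add]
    field_simp
  simp_rw [integrand]
  rw [integral_const_mul, integral_pow_mul_one_add_mul_exp_neg_mul_Ioi hθ₁]
  field_simp
  ring
end

section
/- Let (Ω, 𝔽, P) be a probability space, X : Ω → ℕ integrable, (Y_i)_{i∈ℕ} an i.i.d. sequence of integrable real random variables with common mean a, and W an integrable real random variable with mean μ_W, such that X, the sequence (Y_i), and W are mutually independent. Then the conditional expectation of S = ∑_{i<X} Y_i + W given the σ-algebra generated by X satisfies E[S | σ(X)] = a·X + μ_W almost surely. -/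
/-!
On the fibre `{X = n}` the compound sum is the partial sum `Sₙ = ∑ i < n, Y i`, which is
independent of `σ(X)`; hence its integral over `{X = n}` is `P(X = n) · n a`, and that of `W` is
`P(X = n) · μW`. Since `σ(X)` is generated by the countable partition into the fibres of `X`,
matching integrals on every fibre determines the conditional expectation. The same fibrewise
computation applied to `|Sₙ| ≤ ∑ i < n, |Y i|` bounds `E|∑ i < X, Y i|` by `E[X] · E|Y 0|`.
-/

open MeasureTheory ProbabilityTheory

section DiscreteConditioning

variable {Ω α : Type*} {mΩ : MeasurableSpace Ω} {μ : Measure Ω} {X : Ω → α}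

lemma measurableSet_preimage_of_comap_le (hX : MeasurableSpace.comap X ⊤ ≤ mΩ) (s : Set α) :
    MeasurableSet (X ⁻¹' s) :=
  hX _ ⟨s, trivial, rfl⟩

lemma setIntegral_preimage_singleton_comp (hX : MeasurableSpace.comap X ⊤ ≤ mΩ)
    (φ : α → ℝ) (x : α) :
    ∫ ω in X ⁻¹' {x}, φ (X ω) ∂μ = μ.real (X ⁻¹' {x}) * φ x := by
  rw [setIntegral_congr_fun (measurableSet_preimage_of_comap_le hX {x})
    (fun ω (hω : X ω = x) => by rw [hω]), setIntegral_const, smul_eq_mul]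

variable [Countable α]

lemma integrable_of_summable_integral_norm_preimage_singleton {f : Ω → ℝ}
    (hf : ∀ x, IntegrableOn f (X ⁻¹' {x}) μ)
    (hsum : Summable fun x => ∫ ω in X ⁻¹' {x}, ‖f ω‖ ∂μ) : Integrable f μ := by
  rw [← integrableOn_univ, ← Set.preimage_univ (f := X), ← Set.iUnion_of_singleton,
    Set.preimage_iUnion]
  exact integrableOn_iUnion_of_summable_integral_norm hf hsum

theorem condExp_comap_ae_eq_comp (hX : MeasurableSpace.comap X ⊤ ≤ mΩ)
    [SigmaFinite (μ.trim hX)] {f : Ω → ℝ} {φ : α → ℝ} (hf : Integrable f μ)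
    (hφ : Integrable (fun ω => φ (X ω)) μ)
    (h : ∀ x, ∫ ω in X ⁻¹' {x}, f ω ∂μ = μ.real (X ⁻¹' {x}) * φ x) :
    μ[f | MeasurableSpace.comap X ⊤] =ᵐ[μ] fun ω => φ (X ω) := by
  have hφX : StronglyMeasurable[MeasurableSpace.comap X ⊤] fun ω => φ (X ω) :=
    (measurable_from_top.comp (Measurable.of_comap_le le_rfl)).stronglyMeasurable
  refine (ae_eq_condExp_of_forall_setIntegral_eq hX hf (fun _ _ _ => hφ.integrableOn) ?_
    hφX.aestronglyMeasurable).symm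
  rintro _ ⟨B, -, rfl⟩ -
  have hfib : ∀ x : B, MeasurableSet (X ⁻¹' {(x : α)}) :=
    fun x => measurableSet_preimage_of_comap_le hX _
  have hdisj : Pairwise (Function.onFun Disjoint fun x : B => X ⁻¹' {(x : α)}) :=
    fun x y hxy => (Set.disjoint_singleton.2 (Subtype.coe_ne_coe.2 hxy)).preimage X
  have hB : X ⁻¹' B = ⋃ x : B, X ⁻¹' {(x : α)} := by
    rw [← Set.preimage_iUnion, Set.iUnion_of_singleton_coe]
  rw [hB, integral_iUnion hfib hdisj hφ.integrableOn, integral_iUnion hfib hdisj hf.integrableOn]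
  exact tsum_congr fun x => by rw [h, setIntegral_preimage_singleton_comp hX]

end DiscreteConditioning

section CompoundSum

variable {Ω : Type*} {mΩ : MeasurableSpace Ω} {P : Measure Ω} {X : Ω → ℕ} {Y : ℕ → Ω → ℝ}

lemma indep_comap_partialSum {m : MeasurableSpace Ω}
    (hindep : Indep m (⨆ i, MeasurableSpace.comap (Y i) inferInstance) P) (n : ℕ) :
    Indep m (MeasurableSpace.comap (fun ω => ∑ i ∈ Finset.range n, Y i ω) inferInstance) P := by
  refine indep_of_indep_of_le_right hindep (Measurable.comap_le ?_)
  exact Finset.measurable_sum _ fun i _ =>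
    (comap_measurable (Y i)).mono (le_iSup (fun i => MeasurableSpace.comap (Y i) _) i) le_rfl

lemma setIntegral_comp_compoundSum_preimage_singleton (hX : MeasurableSpace.comap X ⊤ ≤ mΩ)
    (hYmeas : ∀ i, Measurable (Y i))
    (hindep : Indep (MeasurableSpace.comap X ⊤) (⨆ i, MeasurableSpace.comap (Y i) inferInstance) P)
    {φ : ℝ → ℝ} (hφ : Measurable φ) (n : ℕ) :
    ∫ ω in X ⁻¹' {n}, φ (∑ i ∈ Finset.range (X ω), Y i ω) ∂P
      = P.real (X ⁻¹' {n}) * ∫ ω, φ (∑ i ∈ Finset.range n, Y i ω) ∂P := by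
  rw [setIntegral_congr_fun (measurableSet_preimage_of_comap_le hX {n})
    (fun ω (hω : X ω = n) => by rw [hω])]
  exact (indep_comap_partialSum hindep n).setIntegral_eq_mul hX
    (Finset.measurable_sum _ fun i _ => hYmeas i).aemeasurable ⟨{n}, trivial, rfl⟩
    hφ.aestronglyMeasurable

theorem integrable_compoundSum (hX : MeasurableSpace.comap X ⊤ ≤ mΩ)
    (hXint : Integrable (fun ω => (X ω : ℝ)) P)
    (hYmeas : ∀ i, Measurable (Y i)) (hYint : ∀ i, Integrable (Y i) P) {C : ℝ}
    (hYabs : ∀ i, ∫ ω, |Y i ω| ∂P ≤ C)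
    (hindep : Indep (MeasurableSpace.comap X ⊤) (⨆ i, MeasurableSpace.comap (Y i) inferInstance) P) :
    Integrable (fun ω => ∑ i ∈ Finset.range (X ω), Y i ω) P := by
  refine integrable_of_summable_integral_norm_preimage_singleton (X := X) (fun n => ?_) ?_
  · exact (integrable_finsetSum (Finset.range n) fun i _ => hYint i).integrableOn.congr_fun
      (fun ω (hω : X ω = n) => by rw [hω]) (measurableSet_preimage_of_comap_le hX {n})
  have hsummable : Summable fun n : ℕ => P.real (X ⁻¹' {n}) * (n * C) := by
    have h := hasSum_integral_iUnion (fun n => measurableSet_preimage_of_comap_le hX {n})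
      (fun m n hmn => (Set.disjoint_singleton.2 hmn).preimage X)
      (hXint.integrableOn (s := ⋃ n : ℕ, X ⁻¹' {n}))
    simp_rw [setIntegral_preimage_singleton_comp hX (fun n : ℕ => (n : ℝ))] at h
    simpa only [mul_assoc] using h.summable.mul_right C
  refine hsummable.of_nonneg_of_le (fun n => integral_nonneg fun ω => norm_nonneg _) fun n => ?_
  rw [setIntegral_comp_compoundSum_preimage_singleton hX hYmeas hindep measurable_norm n]
  refine mul_le_mul_of_nonneg_left ?_ measureReal_nonneg
  calc ∫ ω, ‖∑ i ∈ Finset.range n, Y i ω‖ ∂P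
      ≤ ∫ ω, ∑ i ∈ Finset.range n, |Y i ω| ∂P :=
        integral_mono (integrable_finsetSum _ fun i _ => hYint i).norm
          (integrable_finsetSum _ fun i _ => (hYint i).abs)
          fun ω => Finset.abs_sum_le_sum_abs _ _
    _ = ∑ i ∈ Finset.range n, ∫ ω, |Y i ω| ∂P :=
        integral_finsetSum _ fun i _ => (hYint i).abs
    _ ≤ n * C := by
        simpa using Finset.sum_le_sum fun i (_ : i ∈ Finset.range n) => hYabs i

end CompoundSum

theorem compound_sum_condexp_mean_general {Ω : Type*} [MeasurableSpace Ω]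
    (P : Measure Ω) [IsProbabilityMeasure P]
    (X : Ω → ℕ) (Y : ℕ → Ω → ℝ) (W : Ω → ℝ) (a μW : ℝ)
    (hXmeas : Measurable X)
    (hXint : Integrable (fun ω => (X ω : ℝ)) P)
    (hYmeas : ∀ i, Measurable (Y i))
    (hYint : ∀ i, Integrable (Y i) P)
    (hYident : ∀ i, IdentDistrib (Y i) (Y 0) P P)
    (hYmean : ∀ i, ∫ ω, Y i ω ∂P = a)
    (hWmeas : Measurable W)
    (hWint : Integrable W P)
    (hWmean : ∫ ω, W ω ∂P = μW)
    (hindep : iIndep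
      ![MeasurableSpace.comap X ⊤,
        ⨆ i, MeasurableSpace.comap (Y i) inferInstance,
        MeasurableSpace.comap W inferInstance] P) :
    P[fun ω => (∑ i ∈ Finset.range (X ω), Y i ω) + W ω | MeasurableSpace.comap X ⊤]
      =ᵐ[P] fun ω => a * (X ω : ℝ) + μW := by
  have hX : MeasurableSpace.comap X ⊤ ≤ _ := hXmeas.comap_le
  have hIndY : Indep (MeasurableSpace.comap X ⊤)
      (⨆ i, MeasurableSpace.comap (Y i) inferInstance) P := by
    simpa using hindep.indep (show (0 : Fin 3) ≠ 1 by decide)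
  have hIndW : Indep (MeasurableSpace.comap X ⊤) (MeasurableSpace.comap W inferInstance) P := by
    simpa using hindep.indep (show (0 : Fin 3) ≠ 2 by decide)
  have hT := integrable_compoundSum hX hXint hYmeas hYint
    (fun i => ((hYident i).comp measurable_abs).integral_eq.le) hIndY
  refine condExp_comap_ae_eq_comp hX (φ := fun n : ℕ => a * (n : ℝ) + μW) (hT.add hWint)
    ((hXint.const_mul a).add (integrable_const μW)) fun n => ?_
  have hS : ∫ ω, ∑ i ∈ Finset.range n, Y i ω ∂P = n * a := by
    simp [integral_finsetSum _ fun i _ => hYint i, hYmean]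
  rw [integral_add hT.integrableOn hWint.integrableOn,
    setIntegral_comp_compoundSum_preimage_singleton hX hYmeas hIndY measurable_id' n,
    hIndW.setIntegral_eq_mul hX hWmeas.aemeasurable ⟨{n}, trivial, rfl⟩
      measurable_id'.aestronglyMeasurable, hS, hWmean]
  ring

/-- Conditional mean of the INAR(1) one-step evolution: with `X : Ω → ℕ` integrable,
`(Y i)` i.i.d. integrable with common mean `a`, `W` integrable with mean `μW`, and
`X`, `(Y i)_{i}`, `W` mutually independent, the conditional expectation of
`S = ∑_{i<X} Y i + W` given `σ(X)` is `a·X + μW` almost surely. -/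
theorem compound_sum_condexp_mean {Ω : Type*} [MeasurableSpace Ω]
    (P : Measure Ω) [IsProbabilityMeasure P]
    (X : Ω → ℕ) (Y : ℕ → Ω → ℝ) (W : Ω → ℝ) (a μW : ℝ)
    (hXmeas : Measurable X)
    (hXint : Integrable (fun ω => (X ω : ℝ)) P)
    (hYmeas : ∀ i, Measurable (Y i))
    (hYint : ∀ i, Integrable (Y i) P)
    (hYiid : iIndepFun Y P)
    (hYident : ∀ i, IdentDistrib (Y i) (Y 0) P P)
    (hYmean : ∀ i, ∫ ω, Y i ω ∂P = a)
    (hWmeas : Measurable W)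
    (hWint : Integrable W P)
    (hWmean : ∫ ω, W ω ∂P = μW)
    (hindep : iIndep
      ![MeasurableSpace.comap X ⊤,
        ⨆ i, MeasurableSpace.comap (Y i) inferInstance,
        MeasurableSpace.comap W inferInstance] P) :
    P[fun ω => (∑ i ∈ Finset.range (X ω), Y i ω) + W ω | MeasurableSpace.comap X ⊤]
      =ᵐ[P] fun ω => a * (X ω : ℝ) + μW :=
  compound_sum_condexp_mean_general P X Y W a μW hXmeas hXint hYmeas hYint hYident hYmean hWmeas
    hWint hWmean hindep
end

section
/- Let (Ω, 𝔽, P) be a probability space, X : Ω → ℕ square-integrable, (Y_i)_{i∈ℕ} an i.i.d. sequence of square-integrable real random variables with common mean a and common variance δ, and W a square-integrable real random variable with variance σ²_W, such that X, the sequence (Y_i), and W are mutually independent. Then the conditional variance of S = ∑_{i<X} Y_i + W given the σ-algebra generated by X satisfies E[(S − E[S | σ(X)])² | σ(X)] = δ·X + σ²_W almost surely. -/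
open MeasureTheory ProbabilityTheory

section AuxINAR
open Set
variable {Ω : Type*} (m' : MeasurableSpace Ω) [MeasurableSpace Ω] (P : Measure Ω)
  [IsProbabilityMeasure P] (X : Ω → ℕ)

/-- atom-wise independence integral -/
lemma atom_integral (hXmeas : Measurable X)
    (hIndep : Indep (MeasurableSpace.comap X ⊤) m' P)
    (n : ℕ) (G : Ω → ℝ) (hGm' : Measurable[m'] G) (hG : AEStronglyMeasurable G P) :
    ∫ ω in X ⁻¹' {n}, G ω ∂P = (P (X ⁻¹' {n})).toReal * ∫ ω, G ω ∂P := by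
  have hs_m : MeasurableSet[MeasurableSpace.comap X ⊤] (X ⁻¹' {n}) := ⟨{n}, trivial, rfl⟩
  have hs : MeasurableSet (X ⁻¹' {n}) := hXmeas (measurableSet_singleton n)
  have hχm : Measurable[MeasurableSpace.comap X ⊤]
      ((X ⁻¹' {n}).indicator (fun _ => (1:ℝ))) :=
    (@measurable_const ℝ Ω _ (MeasurableSpace.comap X ⊤) 1).indicator hs_m
  have hIF : IndepFun ((X ⁻¹' {n}).indicator (fun _ => (1:ℝ))) G P := by
    rw [IndepFun_iff_Indep]
    exact indep_of_indep_of_le_right (indep_of_indep_of_le_left hIndep hχm.comap_le)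
      hGm'.comap_le
  have h1 : (fun ω => (X ⁻¹' {n}).indicator (fun _ => (1:ℝ)) ω * G ω)
      = (X ⁻¹' {n}).indicator G := by
    funext ω
    by_cases hω : ω ∈ X ⁻¹' {n} <;> simp [hω]
  have h2 : ∫ ω, (X ⁻¹' {n}).indicator (fun _ => (1:ℝ)) ω * G ω ∂P
      = (∫ ω, (X ⁻¹' {n}).indicator (fun _ => (1:ℝ)) ω ∂P) * ∫ ω, G ω ∂P :=
    hIF.integral_mul_eq_mul_integral (Measurable.aestronglyMeasurable (μ := P) ((measurable_const (a := (1:ℝ))).indicator hs)) hG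
  have h3 : ∫ ω, (X ⁻¹' {n}).indicator (fun _ => (1:ℝ)) ω ∂P = (P (X ⁻¹' {n})).toReal := by
    rw [integral_indicator hs]; simp [measureReal_def]
  calc ∫ ω in X ⁻¹' {n}, G ω ∂P = ∫ ω, (X ⁻¹' {n}).indicator G ω ∂P :=
        (integral_indicator hs).symm
    _ = ∫ ω, (X ⁻¹' {n}).indicator (fun _ => (1:ℝ)) ω * G ω ∂P := by rw [h1]
    _ = (P (X ⁻¹' {n})).toReal * ∫ ω, G ω ∂P := by rw [h2, h3]

set_option maxHeartbeats 1000000 in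
/-- Master lemma: conditional expectation of `ω ↦ F (X ω) ω` given `σ(X)`. -/
lemma master (hXmeas : Measurable X)
    (hIndep : Indep (MeasurableSpace.comap X ⊤) m' P)
    (F : ℕ → Ω → ℝ)
    (hFmeas : ∀ n, Measurable (F n))
    (hFm' : ∀ n, Measurable[m'] (F n))
    (hFint : ∀ n, Integrable (F n) P)
    (hsum : Summable (fun n => (P (X ⁻¹' {n})).toReal * ∫ ω, |F n ω| ∂P)) :
    P[(fun ω => F (X ω) ω) | MeasurableSpace.comap X ⊤]
      =ᵐ[P] fun ω => ∫ x, F (X ω) x ∂P := by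
  have hm : MeasurableSpace.comap X ⊤ ≤ ‹MeasurableSpace Ω› := hXmeas.comap_le
  have hs : ∀ n, MeasurableSet (X ⁻¹' {n}) := fun n => hXmeas (measurableSet_singleton n)
  have hdisj : Pairwise (Function.onFun Disjoint (fun n => X ⁻¹' {n})) := by
    intro i j hij
    refine Set.disjoint_left.2 fun ω h1 h2 => ?_
    exact hij ((Set.mem_preimage.1 h1).symm.trans (Set.mem_preimage.1 h2))
  have huniv : (⋃ n, X ⁻¹' {n}) = Set.univ := by
    ext ω; simp
  -- measurability of f
  have hfmeas : Measurable (fun ω => F (X ω) ω) := by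
    have : Measurable (fun p : Ω × ℕ => F p.2 p.1) :=
      measurable_from_prod_countable_left (fun n => hFmeas n)
    exact this.comp (measurable_id.prodMk hXmeas)
  have habs_nonneg : ∀ n, (0:ℝ) ≤ (P (X ⁻¹' {n})).toReal * ∫ ω, |F n ω| ∂P := fun n =>
    mul_nonneg ENNReal.toReal_nonneg (integral_nonneg fun ω => abs_nonneg _)
  -- atom integrals of |F n|
  have hatom_abs : ∀ n, ∫ ω in X ⁻¹' {n}, |F n ω| ∂P
      = (P (X ⁻¹' {n})).toReal * ∫ ω, |F n ω| ∂P := fun n =>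
    atom_integral m' P X hXmeas hIndep n _ (measurable_abs.comp (hFm' n)) ((hFmeas n).abs.aestronglyMeasurable)
  -- integrability of f
  have hfint : Integrable (fun ω => F (X ω) ω) P := by
    refine ⟨hfmeas.aestronglyMeasurable, ?_⟩
    rw [hasFiniteIntegral_iff_norm]
    have key : ∫⁻ ω, ENNReal.ofReal ‖F (X ω) ω‖ ∂P
        = ∑' n, ∫⁻ ω in X ⁻¹' {n}, ENNReal.ofReal ‖F (X ω) ω‖ ∂P := by
      rw [← lintegral_iUnion hs hdisj, huniv, Measure.restrict_univ]
    rw [key]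
    have key2 : ∀ n, ∫⁻ ω in X ⁻¹' {n}, ENNReal.ofReal ‖F (X ω) ω‖ ∂P
        = ENNReal.ofReal ((P (X ⁻¹' {n})).toReal * ∫ ω, |F n ω| ∂P) := by
      intro n
      rw [setLIntegral_congr_fun (hs n)
        (fun ω (hω : X ω = n) => by simp only [hω]; rfl)]
      rw [← hatom_abs n, ofReal_integral_eq_lintegral_ofReal
        ((hFint n).abs.integrableOn) (ae_of_all _ fun ω => abs_nonneg _)]
      simp [Real.norm_eq_abs]
    simp_rw [key2]
    rw [← ENNReal.ofReal_tsum_of_nonneg habs_nonneg hsum]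
    exact ENNReal.ofReal_lt_top
  -- the candidate g
  set g : Ω → ℝ := fun ω => ∫ x, F (X ω) x ∂P with hg_def
  have hgm : Measurable[MeasurableSpace.comap X ⊤] g := by
    intro s _
    exact ⟨(fun n => ∫ x, F n x ∂P) ⁻¹' s, trivial, rfl⟩
  have hgmeas : Measurable g := hgm.mono hm le_rfl
  have hgint : Integrable g P := by
    refine ⟨hgmeas.aestronglyMeasurable, ?_⟩
    rw [hasFiniteIntegral_iff_norm]
    have key : ∫⁻ ω, ENNReal.ofReal ‖g ω‖ ∂P
        = ∑' n, ∫⁻ ω in X ⁻¹' {n}, ENNReal.ofReal ‖g ω‖ ∂P := by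
      rw [← lintegral_iUnion hs hdisj, huniv, Measure.restrict_univ]
    rw [key]
    have key2 : ∀ n, ∫⁻ ω in X ⁻¹' {n}, ENNReal.ofReal ‖g ω‖ ∂P
        ≤ ENNReal.ofReal ((P (X ⁻¹' {n})).toReal * ∫ ω, |F n ω| ∂P) := by
      intro n
      have hcongr : ∫⁻ ω in X ⁻¹' {n}, ENNReal.ofReal ‖g ω‖ ∂P
          = ∫⁻ _ in X ⁻¹' {n}, ENNReal.ofReal ‖∫ x, F n x ∂P‖ ∂P :=
        setLIntegral_congr_fun (hs n)
          (fun ω (hω : X ω = n) => by simp only [hg_def, hω])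
      rw [hcongr, setLIntegral_const]
      rw [ENNReal.ofReal_mul ENNReal.toReal_nonneg,
        ENNReal.ofReal_toReal (measure_ne_top P _), mul_comm]
      gcongr
      calc ‖∫ x, F n x ∂P‖ ≤ ∫ x, ‖F n x‖ ∂P := norm_integral_le_integral_norm _
        _ = ∫ x, |F n x| ∂P := by simp [Real.norm_eq_abs]
    calc ∑' n, ∫⁻ ω in X ⁻¹' {n}, ENNReal.ofReal ‖g ω‖ ∂P
        ≤ ∑' n, ENNReal.ofReal ((P (X ⁻¹' {n})).toReal * ∫ ω, |F n ω| ∂P) :=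
          ENNReal.tsum_le_tsum key2
      _ < ⊤ := by
          rw [← ENNReal.ofReal_tsum_of_nonneg habs_nonneg hsum]
          exact ENNReal.ofReal_lt_top
  -- set integral equality
  refine (ae_eq_condExp_of_forall_setIntegral_eq hm hfint
    (fun s _ _ => hgint.integrableOn) ?_ ?_).symm
  · rintro s ⟨A, -, rfl⟩ -
    have hUnion : X ⁻¹' A = ⋃ n : A, X ⁻¹' {(n : ℕ)} := by
      ext ω; simp
    have hsA : ∀ n : A, MeasurableSet (X ⁻¹' {(n : ℕ)}) := fun n => hs n
    have hdisjA : Pairwise (Function.onFun Disjoint (fun n : A => X ⁻¹' {(n : ℕ)})) :=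
      fun i j hij => hdisj (Subtype.coe_injective.ne hij)
    rw [hUnion, integral_iUnion hsA hdisjA (hgint.integrableOn),
      integral_iUnion hsA hdisjA (hfint.integrableOn)]
    congr 1
    funext n
    have hfg : ∫ ω in X ⁻¹' {(n:ℕ)}, F (X ω) ω ∂P = ∫ ω in X ⁻¹' {(n:ℕ)}, F n ω ∂P :=
      setIntegral_congr_fun (hs n) (fun ω (hω : X ω = n) => by rw [hω])
    have hgc : ∫ ω in X ⁻¹' {(n:ℕ)}, g ω ∂P
        = (P (X ⁻¹' {(n:ℕ)})).toReal * ∫ x, F n x ∂P := by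
      have hcongr : ∫ ω in X ⁻¹' {(n:ℕ)}, g ω ∂P
          = ∫ _ in X ⁻¹' {(n:ℕ)}, (∫ x, F (n:ℕ) x ∂P) ∂P :=
        setIntegral_congr_fun (hs n)
          (fun ω (hω : X ω = n) => by simp only [hg_def]; rw [hω])
      rw [hcongr, setIntegral_const, smul_eq_mul, measureReal_def]
    rw [hgc, hfg, atom_integral m' P X hXmeas hIndep n _ (hFm' n)
      (hFmeas n).aestronglyMeasurable]
  · exact (hgm.stronglyMeasurable).aestronglyMeasurable

end AuxINAR

set_option maxHeartbeats 1000000 in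
/-- Conditional variance of the INAR(1) one-step evolution: with `X : Ω → ℕ`
square-integrable, `(Y i)` i.i.d. square-integrable with common mean `a` and common
variance `δ`, `W` square-integrable with variance `σW2`, and `X`, `(Y i)_i`, `W`
mutually independent, the conditional variance of `S = ∑_{i<X} Y i + W` given `σ(X)`
is `δ·X + σW2` almost surely. -/
theorem compound_sum_cond_variance {Ω : Type*} [MeasurableSpace Ω]
    (P : Measure Ω) [IsProbabilityMeasure P]
    (X : Ω → ℕ) (Y : ℕ → Ω → ℝ) (W : Ω → ℝ) (a δ σW2 : ℝ)
    (hXmeas : Measurable X)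
    (hXsq : MemLp (fun ω => (X ω : ℝ)) 2 P)
    (hYmeas : ∀ i, Measurable (Y i))
    (hYsq : ∀ i, MemLp (Y i) 2 P)
    (hYiid : iIndepFun Y P)
    (hYident : ∀ i, IdentDistrib (Y i) (Y 0) P P)
    (hYmean : ∀ i, ∫ ω, Y i ω ∂P = a)
    (hYvar : ∀ i, variance (Y i) P = δ)
    (hWmeas : Measurable W)
    (hWsq : MemLp W 2 P)
    (hWvar : variance W P = σW2)
    (hindep : iIndep
      ![MeasurableSpace.comap X ⊤,
        ⨆ i, MeasurableSpace.comap (Y i) inferInstance,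
        MeasurableSpace.comap W inferInstance] P) :
    P[fun ω =>
        (((∑ i ∈ Finset.range (X ω), Y i ω) + W ω) -
          (P[fun ω' => (∑ i ∈ Finset.range (X ω'), Y i ω') + W ω' |
            MeasurableSpace.comap X ⊤]) ω) ^ 2 | MeasurableSpace.comap X ⊤]
      =ᵐ[P] fun ω => δ * (X ω : ℝ) + σW2 := by
  -- basic notation
  set F1 : ℕ → Ω → ℝ := fun n ω => (∑ i ∈ Finset.range n, Y i ω) + W ω with hF1_def
  set F2 : ℕ → Ω → ℝ := fun n ω => (F1 n ω - ∫ x, F1 n x ∂P) ^ 2 with hF2_def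
  have hs : ∀ n, MeasurableSet (X ⁻¹' {n}) := fun n => hXmeas (measurableSet_singleton n)
  have hdisj : Pairwise (Function.onFun Disjoint (fun n => X ⁻¹' {n})) := by
    intro i j hij
    refine Set.disjoint_left.2 fun ω h1 h2 => ?_
    exact hij ((Set.mem_preimage.1 h1).symm.trans (Set.mem_preimage.1 h2))
  have huniv : (⋃ n, X ⁻¹' {n}) = Set.univ := by ext ω; simp
  -- independence of σ(X) and (⨆ i, MeasurableSpace.comap (Y i) inferInstance) ⊔ (MeasurableSpace.comap W inferInstance)
  have h_le : ∀ k : Fin 3, (![MeasurableSpace.comap X ⊤, (⨆ i, MeasurableSpace.comap (Y i) inferInstance), (MeasurableSpace.comap W inferInstance)] k) ≤ ‹MeasurableSpace Ω› := by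
    intro k
    fin_cases k
    · exact hXmeas.comap_le
    · exact iSup_le fun i => (hYmeas i).comap_le
    · exact hWmeas.comap_le
  have hIndep : Indep (MeasurableSpace.comap X ⊤) ((⨆ i, MeasurableSpace.comap (Y i) inferInstance) ⊔ (MeasurableSpace.comap W inferInstance)) P := by
    have h := indep_biSup_compl h_le hindep {0}
    have e1 : (⨆ k ∈ ({0} : Set (Fin 3)), ![MeasurableSpace.comap X ⊤, (⨆ i, MeasurableSpace.comap (Y i) inferInstance), (MeasurableSpace.comap W inferInstance)] k)
        = MeasurableSpace.comap X ⊤ := by simp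
    have e2 : (⨆ k ∈ ({0} : Set (Fin 3))ᶜ, ![MeasurableSpace.comap X ⊤, (⨆ i, MeasurableSpace.comap (Y i) inferInstance), (MeasurableSpace.comap W inferInstance)] k)
        = (⨆ i, MeasurableSpace.comap (Y i) inferInstance) ⊔ (MeasurableSpace.comap W inferInstance) := by
      apply le_antisymm
      · refine iSup₂_le fun k hk => ?_
        fin_cases k
        · simp at hk
        · exact le_sup_left
        · exact le_sup_right
      · refine sup_le ?_ ?_
        · exact le_iSup₂_of_le 1 (by simp) le_rfl
        · exact le_iSup₂_of_le 2 (by simp) le_rfl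
    rwa [e1, e2] at h
  have hYW : Indep (⨆ i, MeasurableSpace.comap (Y i) inferInstance) (MeasurableSpace.comap W inferInstance) P := by
    have h := hindep.indep (i := 1) (j := 2) (by decide)
    simpa using h
  -- measurability facts
  have hYm' : ∀ i, Measurable[(⨆ i, MeasurableSpace.comap (Y i) inferInstance) ⊔ (MeasurableSpace.comap W inferInstance)] (Y i) := fun i =>
    (comap_measurable (Y i)).mono (le_trans (le_iSup (f := fun i => MeasurableSpace.comap (Y i) inferInstance) i) le_sup_left) le_rfl
  have hWm' : Measurable[(⨆ i, MeasurableSpace.comap (Y i) inferInstance) ⊔ (MeasurableSpace.comap W inferInstance)] W := (comap_measurable W).mono le_sup_right le_rfl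
  have hF1meas : ∀ n, Measurable (F1 n) := fun n =>
    (Finset.measurable_sum _ fun i _ => hYmeas i).add hWmeas
  have hF1m' : ∀ n, Measurable[(⨆ i, MeasurableSpace.comap (Y i) inferInstance) ⊔ (MeasurableSpace.comap W inferInstance)] (F1 n) := fun n =>
    (Finset.measurable_sum _ fun i _ => hYm' i).add hWm'
  -- integrability facts
  have hYint : ∀ i, Integrable (Y i) P := fun i => (hYsq i).integrable one_le_two
  have hWint : Integrable W P := hWsq.integrable one_le_two
  have hSint : ∀ n, Integrable (fun ω => ∑ i ∈ Finset.range n, Y i ω) P := fun n =>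
    integrable_finset_sum _ fun i _ => hYint i
  have hF1int : ∀ n, Integrable (F1 n) P := fun n => (hSint n).add hWint
  have hTmem : ∀ n, MemLp (F1 n) 2 P := fun n =>
    (memLp_finset_sum _ fun i _ => hYsq i).add hWsq
  have hF1mean : ∀ n : ℕ, (∫ x, F1 n x ∂P) = (n : ℝ) * a + ∫ ω, W ω ∂P := by
    intro n
    rw [hF1_def]
    simp only
    rw [integral_add (hSint n) hWint, integral_finset_sum _ fun i _ => hYint i]
    simp only [hYmean, Finset.sum_const, Finset.card_range, nsmul_eq_mul]
  -- variance of F1 n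
  have hδ : 0 ≤ δ := (hYvar 0) ▸ variance_nonneg _ _
  have hσ : 0 ≤ σW2 := hWvar ▸ variance_nonneg _ _
  have hTvar : ∀ n : ℕ, variance (F1 n) P = (n : ℝ) * δ + σW2 := by
    intro n
    have hfeq : F1 n = (∑ i ∈ Finset.range n, Y i) + W := by
      funext ω; simp [hF1_def, Finset.sum_apply]
    have hSmem : MemLp (∑ i ∈ Finset.range n, Y i) 2 P :=
      memLp_finset_sum' _ fun i _ => hYsq i
    have hSW : IndepFun (∑ i ∈ Finset.range n, Y i) W P := by
      rw [IndepFun_iff_Indep]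
      have hfun : (∑ i ∈ Finset.range n, Y i) = (fun ω => ∑ i ∈ Finset.range n, Y i ω) := by
        funext ω; simp
      have hSmY : Measurable[(⨆ i, MeasurableSpace.comap (Y i) inferInstance)] (∑ i ∈ Finset.range n, Y i) := by
        rw [hfun]
        exact Finset.measurable_sum _ fun i _ =>
          (comap_measurable (Y i)).mono
            (le_iSup (f := fun i => MeasurableSpace.comap (Y i) inferInstance) i) le_rfl
      exact indep_of_indep_of_le_right
        (indep_of_indep_of_le_left hYW hSmY.comap_le)
        (comap_measurable W).comap_le
    have hSvar : variance (∑ i ∈ Finset.range n, Y i) P = (n : ℝ) * δ := by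
      rw [IndepFun.variance_sum (fun i _ => hYsq i)
        (fun i _ j _ hij => hYiid.indepFun hij)]
      simp [hYvar, Finset.sum_const, Finset.card_range, nsmul_eq_mul]
    rw [hfeq, IndepFun.variance_add hSmem hWsq hSW, hSvar, hWvar]
  -- integral of F2 n
  have hF2int : ∀ n, Integrable (F2 n) P := by
    intro n
    have h := ((hTmem n).sub (memLp_const (∫ x, F1 n x ∂P))).integrable_sq
    refine h.congr (ae_of_all _ fun ω => ?_)
    simp [hF2_def]
  have hF2integral : ∀ n : ℕ, ∫ ω, F2 n ω ∂P = (n : ℝ) * δ + σW2 := by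
    intro n
    have hveq : variance (F1 n) P = ∫ ω, F2 n ω ∂P := by
      rw [variance_eq_integral (hTmem n).1.aemeasurable]
    rw [← hveq, hTvar n]
  have hF2meas : ∀ n, Measurable (F2 n) := fun n =>
    ((hF1meas n).sub_const _).pow_const 2
  have hF2m' : ∀ n, Measurable[(⨆ i, MeasurableSpace.comap (Y i) inferInstance) ⊔ (MeasurableSpace.comap W inferInstance)] (F2 n) := by
    intro n
    have hφ : Measurable fun x : ℝ => (x - ∫ x, F1 n x ∂P) ^ 2 :=
      (measurable_id.sub_const _).pow_const 2
    exact hφ.comp (hF1m' n)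
  -- summability helper
  have hsummable : ∀ c d : ℝ, 0 ≤ c → 0 ≤ d →
      Summable (fun n => (P (X ⁻¹' {n})).toReal * ((n : ℝ) * c + d)) := by
    intro c d hc hd
    have hXint : Integrable (fun ω => (X ω : ℝ)) P := hXsq.integrable one_le_two
    have hint : Integrable (fun ω => (X ω : ℝ) * c + d) P :=
      (hXint.mul_const c).add (integrable_const d)
    have hnn : 0 ≤ᵐ[P] fun ω => (X ω : ℝ) * c + d :=
      ae_of_all _ fun ω => by positivity
    have hofReal : ENNReal.ofReal (∫ ω, ((X ω : ℝ) * c + d) ∂P)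
        = ∫⁻ ω, ENNReal.ofReal ((X ω : ℝ) * c + d) ∂P :=
      ofReal_integral_eq_lintegral_ofReal hint hnn
    have hpart : ∫⁻ ω, ENNReal.ofReal ((X ω : ℝ) * c + d) ∂P
        = ∑' n : ℕ, ENNReal.ofReal ((n : ℝ) * c + d) * P (X ⁻¹' {n}) := by
      conv_lhs => rw [← Measure.restrict_univ (μ := P), ← huniv,
        lintegral_iUnion hs hdisj]
      congr 1
      funext n
      have hcongr : ∫⁻ ω in X ⁻¹' {n}, ENNReal.ofReal ((X ω : ℝ) * c + d) ∂P
          = ∫⁻ _ in X ⁻¹' {n}, ENNReal.ofReal ((n : ℝ) * c + d) ∂P :=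
        setLIntegral_congr_fun (hs n)
          (fun ω (hω : X ω = n) => by simp only [hω])
      rw [hcongr, setLIntegral_const]
    have hne : (∑' n : ℕ, ENNReal.ofReal ((n : ℝ) * c + d) * P (X ⁻¹' {n})) ≠ ⊤ := by
      rw [← hpart, ← hofReal]
      exact ENNReal.ofReal_ne_top
    have hsum' := ENNReal.summable_toReal hne
    refine hsum'.congr fun n => ?_
    rw [ENNReal.toReal_mul, ENNReal.toReal_ofReal (by positivity), mul_comm]
  -- summability for F1
  have habs1 : ∀ n : ℕ, ∫ ω, |F1 n ω| ∂P
      ≤ (n : ℝ) * (∫ ω, |Y 0 ω| ∂P) + ∫ ω, |W ω| ∂P := by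
    intro n
    have h1 : ∀ ω, |F1 n ω| ≤ (∑ i ∈ Finset.range n, |Y i ω|) + |W ω| := by
      intro ω
      refine (abs_add_le _ _).trans ?_
      gcongr
      exact Finset.abs_sum_le_sum_abs _ _
    calc ∫ ω, |F1 n ω| ∂P
        ≤ ∫ ω, ((∑ i ∈ Finset.range n, |Y i ω|) + |W ω|) ∂P :=
          integral_mono (hF1int n).abs
            ((integrable_finset_sum _ fun i _ => (hYint i).abs).add hWint.abs) h1
      _ = (∑ i ∈ Finset.range n, ∫ ω, |Y i ω| ∂P) + ∫ ω, |W ω| ∂P := by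
          rw [integral_add (integrable_finset_sum _ fun i _ => (hYint i).abs) hWint.abs,
            integral_finset_sum _ fun i _ => (hYint i).abs]
      _ = (n : ℝ) * (∫ ω, |Y 0 ω| ∂P) + ∫ ω, |W ω| ∂P := by
          congr 1
          have : ∀ i, ∫ ω, |Y i ω| ∂P = ∫ ω, |Y 0 ω| ∂P := fun i =>
            ((hYident i).comp measurable_abs).integral_eq
          simp only [this, Finset.sum_const, Finset.card_range, nsmul_eq_mul]
  have hsum1 : Summable (fun n => (P (X ⁻¹' {n})).toReal * ∫ ω, |F1 n ω| ∂P) := by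
    refine Summable.of_nonneg_of_le
      (fun n => mul_nonneg ENNReal.toReal_nonneg (integral_nonneg fun ω => abs_nonneg _))
      (fun n => mul_le_mul_of_nonneg_left (habs1 n) ENNReal.toReal_nonneg)
      (hsummable _ _ (integral_nonneg fun ω => abs_nonneg _)
        (integral_nonneg fun ω => abs_nonneg _))
  -- summability for F2
  have hsum2 : Summable (fun n => (P (X ⁻¹' {n})).toReal * ∫ ω, |F2 n ω| ∂P) := by
    refine (hsummable δ σW2 hδ hσ).congr fun n => ?_
    have habs : ∀ ω, |F2 n ω| = F2 n ω := fun ω => abs_of_nonneg (by simp [hF2_def]; positivity)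
    simp_rw [habs, hF2integral n]
  -- apply master lemma twice
  have hinner : P[(fun ω' => (∑ i ∈ Finset.range (X ω'), Y i ω') + W ω') |
      MeasurableSpace.comap X ⊤] =ᵐ[P] fun ω => ∫ x, F1 (X ω) x ∂P :=
    master ((⨆ i, MeasurableSpace.comap (Y i) inferInstance) ⊔ (MeasurableSpace.comap W inferInstance)) P X hXmeas hIndep F1 hF1meas hF1m' hF1int hsum1
  have h2 : (fun ω => (((∑ i ∈ Finset.range (X ω), Y i ω) + W ω) -
        (P[fun ω' => (∑ i ∈ Finset.range (X ω'), Y i ω') + W ω' |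
          MeasurableSpace.comap X ⊤]) ω) ^ 2)
      =ᵐ[P] fun ω => F2 (X ω) ω := by
    filter_upwards [hinner] with ω hω
    rw [hω]
  have hstep2 : P[(fun ω => F2 (X ω) ω) | MeasurableSpace.comap X ⊤]
      =ᵐ[P] fun ω => ∫ x, F2 (X ω) x ∂P :=
    master ((⨆ i, MeasurableSpace.comap (Y i) inferInstance) ⊔ (MeasurableSpace.comap W inferInstance)) P X hXmeas hIndep F2 hF2meas hF2m' hF2int hsum2
  have hfinal : (fun ω => ∫ x, F2 (X ω) x ∂P) = fun ω => δ * (X ω : ℝ) + σW2 := by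
    funext ω
    rw [hF2integral (X ω)]
    ring
  exact (condExp_congr_ae h2).trans (hstep2.trans (hfinal ▸ Filter.EventuallyEq.rfl))
end
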